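/- arXiv:2401.01263 — 2 statements merged into one kernel-verified Lean document; each statement's English description precedes it below -/
import Mathlib

section
/- Let A_1, ..., A_K be pairwise coprime nonzero polynomials over a field, with deg(A_i) = n_i. Suppose Q_1, ..., Q_K are polynomials with deg(Q_i) ≤ n_i + m_i where m_i ≤ n_i for all i and m_i < n_i for all but at most one index i. If the polynomial B(p) = Σ_{i=1}^K Q_i(p) · ∏_{j ≠ i} A_j(p)^2 is identically zero, then Q_i = 0 for all i. -/
/-!
Write `P_i = ∏_{j ≠ i} A_j²`. Every term of `∑ Q_j P_j` other than the `i`-th is divisible by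
`A_i²`, which is coprime to `P_i`; hence `A_i² ∣ Q_i`. Whenever `deg Q_i < 2 deg A_i` this forces
`Q_i = 0`, which covers every index but at most one, and the remaining term `Q_i P_i` then vanishes
on its own, with `P_i ≠ 0`.
-/

open Polynomial Finset

section CommRing

variable {R ι : Type*} [CommRing R] [Fintype ι] [DecidableEq ι]

theorem dvd_of_sum_mul_prod_erase_eq_zero {f Q : ι → R} (hf : Pairwise fun i j => IsCoprime (f i) (f j))
    (hsum : ∑ i, Q i * ∏ j ∈ univ.erase i, f j = 0) (i : ι) : f i ∣ Q i := by
  have hrest : f i ∣ ∑ j ∈ univ.erase i, Q j * ∏ k ∈ univ.erase j, f k :=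
    dvd_sum fun j hj => (dvd_prod_of_mem f (mem_erase.2 ⟨(ne_of_mem_erase hj).symm,
      mem_univ i⟩)).mul_left _
  have hterm : f i ∣ Q i * ∏ j ∈ univ.erase i, f j := by
    rw [← add_sum_erase _ _ (mem_univ i), add_eq_zero_iff_eq_neg] at hsum
    exact hsum ▸ hrest.neg_right
  have hcop : IsCoprime (f i) (∏ j ∈ univ.erase i, f j) :=
    IsCoprime.prod_right fun j hj => hf (ne_of_mem_erase hj).symm
  exact hcop.dvd_of_dvd_mul_right hterm

theorem eq_zero_of_sum_mul_prod_erase_eq_zero [IsDomain R] {f Q : ι → R} (hf : ∀ j, f j ≠ 0)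
    (hsum : ∑ i, Q i * ∏ j ∈ univ.erase i, f j = 0) {i : ι} (hQ : ∀ j, j ≠ i → Q j = 0) :
    Q i = 0 := by
  rw [sum_eq_single_of_mem i (mem_univ i) fun j _ hj => by rw [hQ j hj, zero_mul]] at hsum
  exact (mul_eq_zero.1 hsum).resolve_right (prod_ne_zero_iff.2 fun j _ => hf j)

end CommRing

/-- If `A_1, …, A_K` are pairwise coprime nonzero polynomials over a field with
`deg A_i = n_i`, and `Q_1, …, Q_K` satisfy `deg Q_i ≤ n_i + m_i` with `m_i ≤ n_i` and
`m_i < n_i` for all but at most one index, then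
`∑ i, Q_i · ∏_{j ≠ i} A_j² = 0` forces all `Q_i = 0`. -/
theorem additive_numerators_vanish {F : Type*} [Field F] {K : ℕ}
    (A Q : Fin K → Polynomial F) (n m : Fin K → ℕ)
    (hA0 : ∀ i, A i ≠ 0)
    (hdn : ∀ i, (A i).natDegree = n i)
    (hcop : ∀ i j, i ≠ j → IsCoprime (A i) (A j))
    (hm : ∀ i, m i ≤ n i)
    (hexc : ∀ i j, m i = n i → m j = n j → i = j)
    (hdQ : ∀ i, (Q i).natDegree ≤ n i + m i)
    (hsum : ∑ i, Q i * ∏ j ∈ univ.erase i, (A j) ^ 2 = 0) :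
    ∀ i, Q i = 0 := by
  have hsq_dvd : ∀ i, A i ^ 2 ∣ Q i :=
    dvd_of_sum_mul_prod_erase_eq_zero (fun i j hij => (hcop i j hij).pow) hsum
  have hsmall : ∀ i, m i < n i → Q i = 0 := fun i hi =>
    eq_zero_of_dvd_of_natDegree_lt (hsq_dvd i) (by rw [natDegree_pow, hdn]; linarith [hdQ i])
  intro i
  rcases (hm i).lt_or_eq with hi | hi
  · exact hsmall i hi
  · exact eq_zero_of_sum_mul_prod_erase_eq_zero (fun j => pow_ne_zero 2 (hA0 j)) hsum
      fun j hji => hsmall j ((hm j).lt_of_ne fun hj => hji (hexc j i hj hi))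
end

section
/- Let φ̂(k) ∈ ℝᵐ and let Υ(k) ∈ ℝᴷ, φ(k) ∈ ℝᵐ for k = 1,...,N, and suppose the matrix R = (1/N)Σ_k φ̂(k)φ(k)ᵀ is nonsingular. Suppose B̄ ∈ ℝ^{m×K} satisfies the fixed-point equation B̄ = R⁻¹ · (1/N)Σ_k φ̂(k)Υ(k)ᵀ, and suppose there exists a block-diagonal matrix B̃ (with the i-th diagonal block a column vector θ̄_i) such that Υ(k)ᵀ - φ(k)ᵀB̃ = ε(k)·[1,...,1] for some scalars ε(k) with (1/N)Σ_k φ̂(k)ε(k) = 0. Then B̄ = B̃; in particular B̄ is block-diagonal. -/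
/-!
Substituting `Υ(k) = B̃ᵀφ(k) + ε(k)·1` into the right-hand side of the fixed-point equation gives
`(1/N) ∑ φ̂(k)Υ(k)ᵀ = R B̃ + ((1/N) ∑ ε(k)φ̂(k)) 1ᵀ = R B̃`, so `B̄ = R⁻¹ R B̃ = B̃`.
-/

open Matrix Finset

namespace Matrix

variable {ι l m n α : Type*} [Fintype ι]

theorem sum_vecMulVec [NonUnitalNonAssocSemiring α] (u : ι → l → α) (v : n → α) :
    vecMulVec (∑ k, u k) v = ∑ k, vecMulVec (u k) v := by
  ext i j
  simp only [vecMulVec_apply, Finset.sum_apply, Matrix.sum_apply, Finset.sum_mul]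

theorem sum_vecMulVec_vecMul_add_smul_one [Fintype m] [CommSemiring α]
    (a : ι → l → α) (φ : ι → m → α) (B : Matrix m n α) (ε : ι → α) :
    ∑ k, vecMulVec (a k) (φ k ᵥ* B + ε k • 1) =
      (∑ k, vecMulVec (a k) (φ k)) * B + vecMulVec (∑ k, ε k • a k) 1 := by
  simp only [vecMulVec_add, sum_add_distrib, Matrix.sum_mul, vecMulVec_mul, sum_vecMulVec,
    vecMulVec_smul, smul_vecMulVec]

end Matrix

theorem converged_iterate_blockDiagonal_general {N m K : ℕ}
    (φhat φ : Fin N → Fin m → ℝ) (Υ : Fin N → Fin K → ℝ)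
    (R : Matrix (Fin m) (Fin m) ℝ)
    (hR : R = (N : ℝ)⁻¹ • ∑ k, Matrix.vecMulVec (φhat k) (φ k))
    (hRinv : IsUnit R.det)
    (Bbar Btil : Matrix (Fin m) (Fin K) ℝ)
    (hBbar : Bbar = R⁻¹ * ((N : ℝ)⁻¹ • ∑ k, Matrix.vecMulVec (φhat k) (Υ k)))
    (ε : Fin N → ℝ)
    (hε : ∀ k c, Υ k c - (φ k) ⬝ᵥ (fun r => Btil r c) = ε k)
    (hopt : (N : ℝ)⁻¹ • ∑ k, ε k • φhat k = 0) :
    Bbar = Btil := by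
  have hΥ : ∀ k, Υ k = φ k ᵥ* Btil + ε k • 1 := fun k => funext fun c => by
    simpa [vecMul] using eq_add_of_sub_eq' (hε k c)
  calc Bbar = R⁻¹ * (R * Btil + vecMulVec ((N : ℝ)⁻¹ • ∑ k, ε k • φhat k) 1) := by
        simp only [hBbar, hΥ, sum_vecMulVec_vecMul_add_smul_one, smul_add, hR, Matrix.smul_mul,
          smul_vecMulVec]
    _ = Btil := by
      rw [hopt, zero_vecMulVec, add_zero, nonsing_inv_mul_cancel_left R Btil hRinv]

/-- If the normal matrix `R = (1/N)∑ φ̂(k)φ(k)ᵀ` is nonsingular, `B̄` satisfies the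
fixed-point equation `B̄ = R⁻¹ (1/N)∑ φ̂(k)Υ(k)ᵀ`, and there is a block-diagonal `B̃` with
`Υ(k)ᵀ - φ(k)ᵀB̃ = ε(k)·[1,…,1]` for scalars `ε(k)` with `(1/N)∑ ε(k)φ̂(k) = 0`, then
`B̄ = B̃`; in particular `B̄` is block-diagonal. -/
theorem converged_iterate_blockDiagonal {N m K : ℕ} (hN : 0 < N)
    (φhat φ : Fin N → Fin m → ℝ) (Υ : Fin N → Fin K → ℝ)
    (R : Matrix (Fin m) (Fin m) ℝ)
    (hR : R = (N : ℝ)⁻¹ • ∑ k, Matrix.vecMulVec (φhat k) (φ k))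
    (hRinv : IsUnit R.det)
    (Bbar Btil : Matrix (Fin m) (Fin K) ℝ)
    (hBbar : Bbar = R⁻¹ * ((N : ℝ)⁻¹ • ∑ k, Matrix.vecMulVec (φhat k) (Υ k)))
    (blk : Fin m → Fin K)
    (hblk : ∀ r c, blk r ≠ c → Btil r c = 0)
    (ε : Fin N → ℝ)
    (hε : ∀ k c, Υ k c - (φ k) ⬝ᵥ (fun r => Btil r c) = ε k)
    (hopt : (N : ℝ)⁻¹ • ∑ k, ε k • φhat k = 0) :
    Bbar = Btil :=
  converged_iterate_blockDiagonal_general φhat φ Υ R hR hRinv Bbar Btil hBbar ε hε hopt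
end
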